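/- arXiv:1310.5313 — 2 statements merged into one kernel-verified Lean document; each statement's English description precedes it below -/
import Mathlib

section
/- For a signed permutation σ on {1,…,n} and a nonnegative integer t, the number of σ-compatible maps g with g(σ₁) ≤ t equals the binomial coefficient C(n + t - des_B(σ), n). -/
/-!
Split off the first value `g(σ₁) = k`: the remaining values form a compatible map of `σ₂⋯σₙ`
bounded by `k - [σ₁ > σ₂]` (with `σₙ₊₁ = 0`), so `Ω_σ(t) = ∑_{j ≤ t - [σ₁ > σ₂]} Ω_{σ₂⋯σₙ}(j)`.
By induction and the hockey-stick identity `∑_{j < T} C(N + j - d, N) = C(N + T - d, N + 1)`,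
this sum is `C(n + t - des_B(σ), n)`, since `des_B(σ) = des_B(σ₂⋯σₙ) + [σ₁ > σ₂]`.
-/

open Finset

/-- Type B descent number of a signed word `σ : Fin m → ℤ`:
counts `i` with `σ i > σ (i+1)`, plus 1 if the last entry is positive. -/
def desB {m : ℕ} (σ : Fin m → ℤ) : ℕ :=
  (Finset.univ.filter fun i : Fin m =>
    (if h : (i : ℕ) + 1 < m then σ ⟨(i : ℕ) + 1, h⟩ else 0) < σ i).card

/-- Ascent number of an `s`-inversion sequence `e` (with `s` 1-indexed),
using the convention `e₀ = 0`, `s₀ = 1`. -/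
def asc {m : ℕ} (s : ℕ → ℕ) (e : Fin m → ℕ) : ℕ :=
  (Finset.univ.filter fun i : Fin m =>
    (if (i : ℕ) = 0 then (0 : ℚ)
     else (e ⟨(i : ℕ) - 1, Nat.lt_of_le_of_lt (Nat.sub_le _ _) i.isLt⟩ : ℚ) / s (i : ℕ))
      < (e i : ℚ) / s ((i : ℕ) + 1)).card

/-- The finset of `s`-inversion sequences of length `m` (with `s` 1-indexed). -/
def invSeqs (s : ℕ → ℕ) (m : ℕ) : Finset (Fin m → ℕ) :=
  Fintype.piFinset fun i => Finset.range (s ((i : ℕ) + 1))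

/-- `s = (1,4,3,8,5,12,…)`: `s_{2i-1} = 2i-1`, `s_{2i} = 4i` (1-indexed). -/
def sA (k : ℕ) : ℕ := if k % 2 = 1 then k else 2 * k

/-- `s = (2,2,6,4,10,6,…)`: `s_{2i-1} = 4i-2`, `s_{2i} = 2i` (1-indexed). -/
def sB (k : ℕ) : ℕ := if k % 2 = 1 then 2 * k else k

/-- `s' = (1,1,3,2,5,3,…)`: `s'_{2i-1} = 2i-1`, `s'_{2i} = i` (1-indexed). -/
def sC (k : ℕ) : ℕ := if k % 2 = 1 then k else k / 2

/-- The lecture hall counting function `f_n^{(s)}(t)`: the number of `n`-tuples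
`(λ₁,…,λₙ)` of nonnegative integers with `0 ≤ λ₁/s₁ ≤ ⋯ ≤ λₙ/sₙ ≤ t`. -/
def lhall (s : ℕ → ℕ) (n t : ℕ) : ℕ :=
  ((Fintype.piFinset fun i : Fin n => Finset.range (t * s ((i : ℕ) + 1) + 1)).filter
    fun lam => ∀ i : Fin n, ∀ h : (i : ℕ) + 1 < n,
      lam i * s ((i : ℕ) + 2) ≤ lam ⟨(i : ℕ) + 1, h⟩ * s ((i : ℕ) + 1)).card

/-- The finset of signed permutations of length `m` on a multiset `M` of
positive integers: words `σ` whose multiset of absolute values is `M`. -/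
def sperm (m : ℕ) (M : Multiset ℤ) : Finset (Fin m → ℤ) :=
  (Fintype.piFinset fun _ : Fin m => M.toFinset ∪ M.toFinset.image (fun x => -x)).filter
    fun σ => (Finset.univ.val.map fun i => |σ i|) = M

/-- The multiset `{1,1,2,2,…,n,n}`. -/
def Pmult (n : ℕ) : Multiset ℤ :=
  (Multiset.range n).bind fun k => {(k : ℤ) + 1, (k : ℤ) + 1}

/-- The multiset `{1,1,2,2,…,n-1,n-1,n}`. -/
def Umult (n : ℕ) : Multiset ℤ :=
  ((Multiset.range (n - 1)).bind fun k => {(k : ℤ) + 1, (k : ℤ) + 1}) + {(n : ℤ)}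

/-- `P_n`: signed permutations on `{1²,2²,…,n²}`. -/
def Pset (n : ℕ) : Finset (Fin (2 * n) → ℤ) := sperm (2 * n) (Pmult n)

/-- `U_n`: signed permutations on `{1²,2²,…,(n-1)²,n}`. -/
def Uset (n : ℕ) : Finset (Fin (2 * n - 1) → ℤ) := sperm (2 * n - 1) (Umult n)

/-- `V_n`: signed permutations on `{1²,2²,…,(n-1)²,n}` where `n` carries a minus sign. -/
def Vset (n : ℕ) : Finset (Fin (2 * n - 1) → ℤ) :=
  (Uset n).filter fun σ => ∀ i, |σ i| = (n : ℤ) → σ i < 0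

/-- `Ω_σ(t)`: the number of `σ`-compatible maps `g` with `g(σ₁) ≤ t`, recorded
as the tuple `(g(σ₁),…,g(σₙ))`. -/
def Omega {n : ℕ} (σ : Fin n → ℤ) (t : ℕ) : ℕ :=
  ((Fintype.piFinset fun _ : Fin n => Finset.range (t + 1)).filter fun g =>
    (∀ i : Fin n, ∀ h : (i : ℕ) + 1 < n,
      g ⟨(i : ℕ) + 1, h⟩ ≤ g i ∧ (σ ⟨(i : ℕ) + 1, h⟩ < σ i → g ⟨(i : ℕ) + 1, h⟩ < g i)) ∧
    (∀ i : Fin n, (i : ℕ) = n - 1 → 0 < σ i → 1 ≤ g i)).card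

/-- Linear extensions of the plane forest `F_n` consisting of `n` two-vertex trees:
`π j` is the vertex placed at position `j`, where the root of the `i`-th tree is
vertex `2i` and its child is vertex `2i+1`; roots must precede their children. -/
def linExts (n : ℕ) : Finset (Equiv.Perm (Fin (2 * n))) :=
  Finset.univ.filter fun π => ∀ i : Fin n,
    π.symm ⟨2 * (i : ℕ), by have := i.isLt; omega⟩ <
      π.symm ⟨2 * (i : ℕ) + 1, by have := i.isLt; omega⟩

/-- The signed labelings `L(F_n)`: for each `i` (0-indexed), the labels of the root
and the child of the `i`-th tree form one of the four allowed pairs. -/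
noncomputable def labelings (n : ℕ) : Finset (Fin (2 * n) → ℤ) :=
  (Fintype.piFinset fun _ : Fin (2 * n) => Finset.Icc (-(2 * n : ℤ)) (2 * n)).filter
    fun w => ∀ i : Fin n,
      (w ⟨2 * (i : ℕ), by have := i.isLt; omega⟩,
       w ⟨2 * (i : ℕ) + 1, by have := i.isLt; omega⟩) ∈
        ({(2 * (i : ℤ) + 2, 2 * (i : ℤ) + 1), (2 * (i : ℤ) + 2, -(2 * (i : ℤ) + 1)),
          (-(2 * (i : ℤ) + 2), 2 * (i : ℤ) + 1), (-(2 * (i : ℤ) + 1), -(2 * (i : ℤ) + 2))} :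
          Finset (ℤ × ℤ))

/-- The descent statistic `|{i : σᵢ > σᵢ₊₁}| + [σ₁ < 0]`. -/
def desA {m : ℕ} (σ : Fin m → ℤ) : ℕ :=
  (Finset.univ.filter fun i : Fin m =>
    if h : (i : ℕ) + 1 < m then σ ⟨(i : ℕ) + 1, h⟩ < σ i else False).card
  + (Finset.univ.filter fun i : Fin m => (i : ℕ) = 0 ∧ σ i < 0).card

/-- The map `σ₁⋯σₙ ↦ (−σₙ)(−σₙ₋₁)⋯(−σ₁)`. -/
def revNeg {m : ℕ} (σ : Fin m → ℤ) : Fin m → ℤ := fun i => -σ i.rev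

theorem Nat.sum_range_choose_add_sub {N d : ℕ} (hd : d ≤ N) (T : ℕ) :
    ∑ j ∈ range T, (N + j - d).choose N = (N + T - d).choose (N + 1) := by
  induction T with
  | zero => simpa using (Nat.choose_eq_zero_of_lt (by omega)).symm
  | succ T ih =>
    rw [sum_range_succ, ih]
    rcases le_or_gt d T with hdT | hdT
    · rw [show N + (T + 1) - d = N + T - d + 1 by omega, Nat.choose_succ_succ', add_comm]
    · rw [Nat.choose_eq_zero_of_lt (show N + T - d < N + 1 by omega),
        Nat.choose_eq_zero_of_lt (show N + T - d < N by omega),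
        Nat.choose_eq_zero_of_lt (show N + (T + 1) - d < N + 1 by omega)]

theorem Finset.sum_range_ite_le_sub {M : Type*} [AddCommMonoid M] (f : ℕ → M) (m d : ℕ) :
    ∑ k ∈ range m, (if d ≤ k then f (k - d) else 0) = ∑ j ∈ range (m - d), f j := by
  have hIco : {k ∈ range m | d ≤ k} = Ico d m := by ext; simp [and_comm]
  rw [← sum_filter, hIco, sum_Ico_eq_sum_range]
  simp

section NextOrZero

variable {α : Type*} [Zero α]

-- Continuing a word by `0` makes the conditions `σₙ > 0` of `des_B` and `g(σₙ) ≥ 1` ordinary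
-- descent conditions at the last position.
def nextOrZero {m : ℕ} (f : Fin m → α) (i : Fin m) : α :=
  if h : (i : ℕ) + 1 < m then f ⟨(i : ℕ) + 1, h⟩ else 0

theorem nextOrZero_castSucc {m : ℕ} (f : Fin (m + 1) → α) (i : Fin m) :
    nextOrZero f i.castSucc = f i.succ := by
  rw [nextOrZero, dif_pos (by simp)]
  rfl

theorem nextOrZero_succ {m : ℕ} (f : Fin (m + 1) → α) (i : Fin m) :
    nextOrZero f i.succ = nextOrZero (Fin.tail f) i := by
  by_cases h : (i : ℕ) + 1 < m
  · simp only [nextOrZero, Fin.val_succ, Nat.add_lt_add_iff_right, h, dif_pos]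
    rfl
  · simp [nextOrZero, h]

end NextOrZero

theorem desB_eq_card {m : ℕ} (σ : Fin m → ℤ) : desB σ = #{i | nextOrZero σ i < σ i} := rfl

def firstDescent {n : ℕ} (σ : Fin (n + 1) → ℤ) : ℕ := if nextOrZero σ 0 < σ 0 then 1 else 0

theorem firstDescent_le_one {n : ℕ} (σ : Fin (n + 1) → ℤ) : firstDescent σ ≤ 1 := by
  unfold firstDescent
  split_ifs <;> omega

theorem desB_succ {n : ℕ} (σ : Fin (n + 1) → ℤ) :
    desB σ = desB (Fin.tail σ) + firstDescent σ := by
  simp only [desB_eq_card, card_filter, Fin.sum_univ_succ, nextOrZero_succ]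
  rw [add_comm]
  rfl

theorem desB_le {m : ℕ} (σ : Fin m → ℤ) : desB σ ≤ m :=
  (card_filter_le _ _).trans (by simp)

def IsCompatible {m : ℕ} (σ : Fin m → ℤ) (g : Fin m → ℕ) : Prop :=
  ∀ i, nextOrZero g i ≤ g i ∧ (nextOrZero σ i < σ i → nextOrZero g i < g i)

theorem IsCompatible.antitone {m : ℕ} {σ : Fin (m + 1) → ℤ} {g : Fin (m + 1) → ℕ}
    (hg : IsCompatible σ g) : Antitone g :=
  Fin.antitone_iff_succ_le.2 fun i => by simpa [nextOrZero_castSucc] using (hg i.castSucc).1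

theorem isCompatible_cons {n : ℕ} {σ : Fin (n + 1) → ℤ} {k : ℕ} {h : Fin n → ℕ} :
    IsCompatible σ (Fin.cons k h) ↔
      nextOrZero (Fin.cons k h : Fin (n + 1) → ℕ) 0 + firstDescent σ ≤ k
        ∧ IsCompatible (Fin.tail σ) h := by
  rw [IsCompatible, Fin.forall_fin_succ]
  simp only [nextOrZero_succ, Fin.cons_zero, Fin.cons_succ, Fin.tail_cons]
  refine and_congr ?_ Iff.rfl
  unfold firstDescent
  split_ifs <;> omega

theorem IsCompatible.forall_le_iff {n : ℕ} {τ : Fin n → ℤ} {h : Fin n → ℕ}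
    (hh : IsCompatible τ h) (k b : ℕ) :
    (∀ i, h i ≤ b) ↔ nextOrZero (Fin.cons k h : Fin (n + 1) → ℕ) 0 ≤ b := by
  cases n with
  | zero => simp [nextOrZero]
  | succ n =>
    rw [← Fin.castSucc_zero, nextOrZero_castSucc, Fin.cons_succ]
    exact ⟨fun hb => hb 0, fun hb i => (hh.antitone (Fin.zero_le i)).trans hb⟩

instance {m : ℕ} (σ : Fin m → ℤ) : DecidablePred (IsCompatible σ) :=
  fun _ => inferInstanceAs (Decidable (∀ _, _))

def compatMaps {m : ℕ} (σ : Fin m → ℤ) (t : ℕ) : Finset (Fin m → ℕ) :=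
  {g ∈ Fintype.piFinset fun _ => range (t + 1) | IsCompatible σ g}

theorem mem_compatMaps {m : ℕ} {σ : Fin m → ℤ} {t : ℕ} {g : Fin m → ℕ} :
    g ∈ compatMaps σ t ↔ (∀ i, g i ≤ t) ∧ IsCompatible σ g := by
  simp [compatMaps]

theorem Omega_eq_card_compatMaps {m : ℕ} (σ : Fin m → ℤ) (t : ℕ) :
    Omega σ t = #(compatMaps σ t) := by
  rw [Omega, compatMaps]
  refine congrArg card (filter_congr fun g _ => ⟨fun ⟨hstep, hlast⟩ i => ?_, fun hg => ⟨?_, ?_⟩⟩)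
  · unfold nextOrZero
    split_ifs with hi
    · exact hstep i hi
    · exact ⟨Nat.zero_le _, hlast i (by omega)⟩
  · intro i hi
    simpa [nextOrZero, hi] using hg i
  · intro i hi
    have := hg i
    simp only [nextOrZero, show ¬((i : ℕ) + 1 < m) by omega, dite_false] at this
    exact this.2

theorem cons_mem_compatMaps_iff {n : ℕ} {σ : Fin (n + 1) → ℤ} {t k : ℕ} (hk : k ≤ t)
    {h : Fin n → ℕ} :
    Fin.cons k h ∈ compatMaps σ t ↔
      h ∈ compatMaps (Fin.tail σ) (k - firstDescent σ) ∧ firstDescent σ ≤ k := by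
  simp only [mem_compatMaps, isCompatible_cons, Fin.forall_fin_succ, Fin.cons_zero, Fin.cons_succ]
  by_cases hh : IsCompatible (Fin.tail σ) h
  · rw [hh.forall_le_iff k, hh.forall_le_iff k]
    simp only [hh, and_true]
    omega
  · simp [hh]

theorem card_compatMaps_filter_zero_eq {n : ℕ} (σ : Fin (n + 1) → ℤ) {t k : ℕ} (hk : k ≤ t) :
    #{g ∈ compatMaps σ t | g 0 = k} =
      if firstDescent σ ≤ k then #(compatMaps (Fin.tail σ) (k - firstDescent σ)) else 0 := by
  have : #{g ∈ compatMaps σ t | g 0 = k} =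
      #{h ∈ compatMaps (Fin.tail σ) (k - firstDescent σ) | firstDescent σ ≤ k} := by
    refine card_nbij' Fin.tail (Fin.cons (α := fun _ => ℕ) k) (fun g hg => ?_) (fun h hh => ?_)
      (fun g hg => ?_) (fun h _ => ?_)
    · obtain ⟨hmem, hg0⟩ := mem_filter.1 hg
      rw [← Fin.cons_self_tail g, hg0, cons_mem_compatMaps_iff hk] at hmem
      exact mem_filter.2 hmem
    · exact mem_filter.2 ⟨(cons_mem_compatMaps_iff hk).2 (mem_filter.1 hh), Fin.cons_zero _ _⟩
    · rw [← (mem_filter.1 hg).2, Fin.cons_self_tail]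
    · exact Fin.tail_cons (α := fun _ => ℕ) k h
  rw [this, filter_const]
  split_ifs <;> simp

theorem Omega_succ {n : ℕ} (σ : Fin (n + 1) → ℤ) (t : ℕ) :
    Omega σ t = ∑ j ∈ range (t + 1 - firstDescent σ), Omega (Fin.tail σ) j := by
  rw [Omega_eq_card_compatMaps, card_eq_sum_card_fiberwise (f := fun g => g 0) (t := range (t + 1))
    fun g hg => mem_range.2 (Nat.lt_succ_of_le ((mem_compatMaps.1 hg).1 0)),
    ← sum_range_ite_le_sub]
  refine sum_congr rfl fun k hk => ?_
  rw [card_compatMaps_filter_zero_eq σ (Nat.lt_succ_iff.1 (mem_range.1 hk)),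
    Omega_eq_card_compatMaps]

theorem Omega_of_isEmpty (σ : Fin 0 → ℤ) (t : ℕ) : Omega σ t = 1 := by
  simp [Omega]

open Polynomial PowerSeries

theorem stmt5_general (n : ℕ) (σ : Fin n → ℤ) (t : ℕ) :
    Omega σ t = (n + t - desB σ).choose n := by
  induction n generalizing t with
  | zero => simp [Omega_of_isEmpty]
  | succ n ih =>
    rw [Omega_succ, desB_succ, sum_congr rfl fun j _ => ih (Fin.tail σ) j,
      Nat.sum_range_choose_add_sub (desB_le _)]
    have := firstDescent_le_one σ
    congr 1
    omega

theorem stmt5 (n : ℕ) (hn : 1 ≤ n) (σ : Fin n → ℤ)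
    (hval : ∀ i, 1 ≤ |σ i| ∧ |σ i| ≤ (n : ℤ))
    (hinj : Function.Injective fun i => |σ i|) (t : ℕ) :
    Omega σ t = (n + t - desB σ).choose n :=
  stmt5_general n σ t
end

section
/- For every n ≥ 1, ∑_{σ∈V_n} x^{des_B(σ)} / (1−x)^{2n} = ∑_{t≥0} (t+1)^n (2t+1)^{n−1} x^t as formal power series, where V_n is the set of signed permutations on {1²,…,(n−1)²,n} with the entry n negative. -/
open Finset

open Polynomial PowerSeries

/-!
A `σ`-compatible map `g` (weakly decreasing, strictly at the descents of `σ`, with `g ≥ 1` at the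
end when the last letter is positive) becomes, after subtracting from `g i` the number of descents
at or after `i`, an arbitrary weakly decreasing map bounded by `t - des σ`. Hence
`Ω_σ(t) = C(m + t - des σ, m)` for `t ≥ des σ` (and `0` below), i.e.
`∑_t Ω_σ(t) x^t = x^{des σ} / (1 - x)^{m+1}`, and it remains to show `∑_{σ ∈ V_n} Ω_σ(t) = (t+1)^n (2t+1)^{n-1}`.

A compatible pair `(σ, g)` is the same as a word of pairs `(g i, σ i)` that decreases weakly in the
lexicographic order with the letters ordered backwards, all of whose pairs are admissible
(`g i ≤ t`, and `g i ≥ 1` when `σ i > 0`). Such a word is the sorted list of its multiset of pairs,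
so the pairs may be chosen freely letter by letter: a multiset of two of the `2t+1` admissible
pairs for each letter `a < n`, and one of the `t+1` admissible pairs for the negative letter `n`.
This gives `C(2t+2, 2)^{n-1} (t+1) = (t+1)^n (2t+1)^{n-1}`.
-/

section Sorting

theorem Finset.card_sym_eq_multichoose {α : Type*} [DecidableEq α] (s : Finset α) (k : ℕ) :
    (s.sym k).card = s.card.multichoose k := by
  have h := Finset.sym_map (n := k) (Function.Embedding.subtype (· ∈ s)) s.attach
  rw [attach_map_val, ← univ_eq_attach, sym_univ] at h
  rw [h, card_map, card_univ, Sym.card_sym_eq_multichoose, Fintype.card_coe]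

variable {α : Type*} [LinearOrder α] {m : ℕ}

theorem Antitone.eq_of_univ_map_eq {f g : Fin m → α} (hf : Antitone f) (hg : Antitone g)
    (h : univ.val.map f = univ.val.map g) : f = g := by
  rw [Fin.univ_val_map, Fin.univ_val_map, Multiset.coe_eq_coe] at h
  exact List.ofFn_injective (h.eq_of_sortedGE hf.sortedGE_ofFn hg.sortedGE_ofFn)

theorem Multiset.exists_antitone_univ_map_eq (S : Multiset α) (hS : Multiset.card S = m) :
    ∃ f : Fin m → α, Antitone f ∧ univ.val.map f = S := by
  subst hS
  set l := S.sort (· ≥ ·)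
  have hl : l.length = Multiset.card S := Multiset.length_sort _
  refine ⟨l.get ∘ Fin.cast hl.symm, ?_, ?_⟩
  · exact (Multiset.pairwise_sort S _).sortedGE.comp_monotone (Fin.castOrderIso hl.symm).monotone
  · rw [Fin.univ_val_map]
    conv_rhs => rw [← Multiset.sort_eq S (· ≥ ·)]
    exact congrArg _ (List.ext_getElem (by simp) fun _ _ _ => by simp [l])

theorem card_eq_multichoose_of_mem_iff_antitone [DecidableEq α] (F : Finset (Fin m → α))
    (s : Finset α) (hF : ∀ f, f ∈ F ↔ Antitone f ∧ ∀ i, f i ∈ s) :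
    F.card = s.card.multichoose m := by
  rw [← card_sym_eq_multichoose]
  refine card_bij
    (fun f _ => Sym.mk (univ.val.map f) (by rw [Multiset.card_map, card_val, card_fin]))
    (fun f hf => mem_sym_iff.2 fun a ha => ?_) (fun f hf g hg hfg => ?_) (fun S hS => ?_)
  · obtain ⟨i, -, rfl⟩ := Multiset.mem_map.1 ((Sym.mem_mk _ _ _).1 ha)
    exact ((hF f).1 hf).2 i
  · exact ((hF f).1 hf).1.eq_of_univ_map_eq ((hF g).1 hg).1 (congrArg Subtype.val hfg)
  · obtain ⟨f, hf, hfS⟩ := Multiset.exists_antitone_univ_map_eq (S : Multiset α) S.2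
    refine ⟨f, (hF f).2 ⟨hf, fun i => ?_⟩, Sym.coe_injective hfS⟩
    exact mem_sym_iff.1 hS _ (by rw [← Sym.mem_coe, ← hfS]; simp)

end Sorting

section Padding

variable {β : Type*} {m : ℕ}

def padWith (f : Fin m → β) (d : β) (j : ℕ) : β := if h : j < m then f ⟨j, h⟩ else d

theorem padWith_of_lt (f : Fin m → β) (d : β) {j : ℕ} (h : j < m) : padWith f d j = f ⟨j, h⟩ :=
  dif_pos h

theorem padWith_of_le (f : Fin m → β) (d : β) {j : ℕ} (h : m ≤ j) : padWith f d j = d :=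
  dif_neg (by omega)

@[simp] theorem padWith_val (f : Fin m → β) (d : β) (i : Fin m) : padWith f d i = f i :=
  padWith_of_lt f d i.isLt

theorem antitone_padWith_iff [Preorder β] {f : Fin m → β} {d : β} :
    Antitone (padWith f d) ↔ Antitone f ∧ ∀ i, d ≤ f i := by
  refine ⟨fun h => ⟨fun i j hij => ?_, fun i => ?_⟩, fun ⟨hf, hd⟩ a b hab => ?_⟩
  · simpa using h (show (i : ℕ) ≤ j from hij)
  · simpa [padWith_of_le f d le_rfl] using h (show (i : ℕ) ≤ m by omega)
  · by_cases hb : b < m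
    · rw [padWith_of_lt f d hb, padWith_of_lt f d (by omega)]
      exact hf (show (⟨a, _⟩ : Fin m) ≤ ⟨b, hb⟩ from hab)
    · rw [padWith_of_le f d (by omega)]
      by_cases ha : a < m
      · exact (padWith_of_lt f d ha).symm ▸ hd _
      · rw [padWith_of_le f d (by omega)]

end Padding

section Compatible

variable {m : ℕ}

def compatibleMaps (σ : Fin m → ℤ) (t : ℕ) : Finset (Fin m → ℕ) :=
  (Fintype.piFinset fun _ : Fin m => Finset.range (t + 1)).filter fun g =>
    (∀ i : Fin m, ∀ h : (i : ℕ) + 1 < m,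
      g ⟨(i : ℕ) + 1, h⟩ ≤ g i ∧ (σ ⟨(i : ℕ) + 1, h⟩ < σ i → g ⟨(i : ℕ) + 1, h⟩ < g i)) ∧
    (∀ i : Fin m, (i : ℕ) = m - 1 → 0 < σ i → 1 ≤ g i)

theorem card_compatibleMaps (σ : Fin m → ℤ) (t : ℕ) :
    (compatibleMaps σ t).card = Omega σ t := rfl

theorem mem_compatibleMaps {σ : Fin m → ℤ} {t : ℕ} {g : Fin m → ℕ} :
    g ∈ compatibleMaps σ t ↔ (∀ i, g i ≤ t) ∧ ∀ j : ℕ,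
      padWith g 0 (j + 1) + (if padWith σ 0 (j + 1) < padWith σ 0 j then 1 else 0)
        ≤ padWith g 0 j := by
  simp only [compatibleMaps, mem_filter, Fintype.mem_piFinset, mem_range, Nat.lt_succ_iff]
  refine and_congr_right fun _ => ⟨fun ⟨hadj, hlast⟩ j => ?_, fun hstep => ⟨fun i hi => ?_, ?_⟩⟩
  · rcases lt_trichotomy (j + 1) m with hj | hj | hj
    · have := hadj ⟨j, by omega⟩ hj
      dsimp only at this
      rw [padWith_of_lt _ _ hj, padWith_of_lt _ _ hj, padWith_of_lt _ _ (by omega),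
        padWith_of_lt _ _ (by omega)]
      split_ifs <;> omega
    · have := hlast ⟨j, by omega⟩ (by simp; omega)
      rw [padWith_of_le _ _ hj.ge, padWith_of_le _ _ hj.ge, padWith_of_lt _ _ (by omega),
        padWith_of_lt _ _ (by omega)]
      split_ifs <;> omega
    · simp [padWith_of_le _ _ (show m ≤ j by omega), padWith_of_le _ _ (show m ≤ j + 1 by omega)]
  · have := hstep i
    rw [padWith_of_lt _ _ hi, padWith_of_lt _ _ hi, padWith_val, padWith_val] at this
    exact ⟨by split_ifs at this <;> omega, fun h => by rw [if_pos h] at this; omega⟩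
  · intro i hi hpos
    have := hstep i
    rw [padWith_of_le _ _ (by omega), padWith_of_le _ _ (by omega), padWith_val, padWith_val,
      if_pos hpos] at this
    omega

def descentsFrom (σ : Fin m → ℤ) (j : ℕ) : ℕ :=
  ∑ i ∈ Ico j m, if padWith σ 0 (i + 1) < padWith σ 0 i then 1 else 0

theorem descentsFrom_zero (σ : Fin m → ℤ) : descentsFrom σ 0 = desB σ := by
  rw [descentsFrom, desB, card_filter, ← range_eq_Ico, ← Fin.sum_univ_eq_sum_range]
  simp only [padWith_val]
  rfl

theorem descentsFrom_of_le (σ : Fin m → ℤ) {j : ℕ} (hj : m ≤ j) : descentsFrom σ j = 0 := by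
  rw [descentsFrom, Ico_eq_empty_of_le hj, sum_empty]

theorem descentsFrom_le_desB (σ : Fin m → ℤ) (j : ℕ) : descentsFrom σ j ≤ desB σ := by
  rw [← descentsFrom_zero]
  exact sum_le_sum_of_subset (Ico_subset_Ico_left (Nat.zero_le j))

theorem descentsFrom_eq_add (σ : Fin m → ℤ) (j : ℕ) :
    descentsFrom σ j = descentsFrom σ (j + 1) +
      if padWith σ 0 (j + 1) < padWith σ 0 j then 1 else 0 := by
  by_cases hj : j < m
  · rw [descentsFrom, sum_eq_sum_Ico_succ_bot hj, add_comm]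
    rfl
  · have hj' : m ≤ j := not_lt.1 hj
    simp [descentsFrom_of_le σ hj', descentsFrom_of_le σ (hj'.trans j.le_succ),
      padWith_of_le σ 0 hj', padWith_of_le σ 0 (hj'.trans j.le_succ)]

theorem descentsFrom_le_of_mem_compatibleMaps {σ : Fin m → ℤ} {t : ℕ} {g : Fin m → ℕ}
    (hg : g ∈ compatibleMaps σ t) (j : ℕ) : descentsFrom σ j ≤ padWith g 0 j := by
  have hstep := (mem_compatibleMaps.1 hg).2
  rcases le_or_gt j m with hj | hj
  · refine Nat.decreasingInduction (motive := fun j _ => descentsFrom σ j ≤ padWith g 0 j)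
      (fun k _ ih => ?_) (by simp [descentsFrom_of_le σ le_rfl]) hj
    have := hstep k
    rw [descentsFrom_eq_add]
    omega
  · simp [descentsFrom_of_le σ hj.le]

theorem padWith_le_of_mem_compatibleMaps {σ : Fin m → ℤ} {t : ℕ} {g : Fin m → ℕ}
    (hg : g ∈ compatibleMaps σ t) (j : ℕ) : padWith g 0 j ≤ t := by
  unfold padWith
  split_ifs
  exacts [(mem_compatibleMaps.1 hg).1 _, Nat.zero_le t]

theorem antitone_padWith_sub_descentsFrom {σ : Fin m → ℤ} {t : ℕ} {g : Fin m → ℕ}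
    (hg : g ∈ compatibleMaps σ t) : Antitone fun j => padWith g 0 j - descentsFrom σ j :=
  antitone_nat_of_succ_le fun j => by
    have := (mem_compatibleMaps.1 hg).2 j
    have := descentsFrom_le_of_mem_compatibleMaps hg (j + 1)
    have := descentsFrom_eq_add σ j
    omega

theorem add_descentsFrom_mem_compatibleMaps {σ : Fin m → ℤ} {t : ℕ} {f : Fin m → ℕ}
    (hd : desB σ ≤ t) (hf : Antitone f) (hft : ∀ i, f i ≤ t - desB σ) :
    (fun i => f i + descentsFrom σ i) ∈ compatibleMaps σ t := by
  have hpad : ∀ j, padWith (fun i => f i + descentsFrom σ i) 0 j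
      = padWith f 0 j + descentsFrom σ j := fun j => by
    unfold padWith
    split_ifs with hj
    · rfl
    · simp [descentsFrom_of_le σ (not_lt.1 hj)]
  refine mem_compatibleMaps.2 ⟨fun i => ?_, fun j => ?_⟩
  · have := hft i
    have := descentsFrom_le_desB σ i
    omega
  · have := (antitone_padWith_iff.2 ⟨hf, fun _ => Nat.zero_le _⟩) (show j ≤ j + 1 by omega)
    have := descentsFrom_eq_add σ j
    rw [hpad, hpad]
    omega

theorem card_compatibleMaps_eq (σ : Fin m → ℤ) (t : ℕ) :
    (compatibleMaps σ t).card = if desB σ ≤ t then (m + (t - desB σ)).choose m else 0 := by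
  have hlow := @descentsFrom_le_of_mem_compatibleMaps m σ t
  have hup := @padWith_le_of_mem_compatibleMaps m σ t
  split_ifs with hd
  swap
  · refine card_eq_zero.2 (eq_empty_of_forall_notMem fun g hg => hd ?_)
    have := hlow hg 0
    have := hup hg 0
    rw [descentsFrom_zero] at *
    omega
  let shift (g : Fin m → ℕ) (i : Fin m) : ℕ := g i - descentsFrom σ i
  have hinj : Set.InjOn shift (compatibleMaps σ t) := fun g hg g' hg' h => funext fun i => by
    have := congrFun h i
    have := hlow hg i
    have := hlow hg' i
    simp only [padWith_val, shift] at *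
    omega
  rw [← card_image_of_injOn hinj,
    card_eq_multichoose_of_mem_iff_antitone _ (range (t - desB σ + 1)), card_range,
    Nat.multichoose_eq]
  · congr 1
    omega
  intro f
  simp only [mem_image, mem_range, Nat.lt_succ_iff]
  constructor
  · rintro ⟨g, hg, rfl⟩
    have hanti := antitone_padWith_sub_descentsFrom hg
    refine ⟨fun i i' hii' => by simpa [shift] using hanti (show (i : ℕ) ≤ i' from hii'),
      fun i => ?_⟩
    have := hanti (Nat.zero_le i)
    have := hup hg 0
    have := descentsFrom_zero σ
    simp only [padWith_val, shift] at *
    omega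
  · rintro ⟨hf, hft⟩
    exact ⟨_, add_descentsFrom_mem_compatibleMaps hd hf hft, funext fun i => by simp [shift]⟩

theorem sum_X_pow_desB_mul_invOneSubPow (W : Finset (Fin m → ℤ)) :
    (∑ σ ∈ W, (X : ℤ⟦X⟧) ^ desB σ) * (invOneSubPow ℤ (m + 1) : ℤ⟦X⟧)
      = mk fun t => ∑ σ ∈ W, (Omega σ t : ℤ) := by
  ext t
  rw [sum_mul, map_sum, coeff_mk]
  refine sum_congr rfl fun σ _ => ?_
  rw [invOneSubPow_val_succ_eq_mk_add_choose, PowerSeries.coeff_X_pow_mul', ← card_compatibleMaps,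
    card_compatibleMaps_eq]
  split_ifs <;> simp

end Compatible

section LexWords

def lexPair (v : ℤ) (h : ℕ) : ℕ ×ₗ ℤᵒᵈ := toLex (h, OrderDual.toDual v)

theorem lexPair_le_lexPair {v v' : ℤ} {h h' : ℕ} :
    lexPair v' h' ≤ lexPair v h ↔ h' + (if v' < v then 1 else 0) ≤ h := by
  simp only [lexPair, Prod.Lex.toLex_le_toLex, OrderDual.toDual_le_toDual]
  split_ifs <;> omega

theorem lexPair_inj {v v' : ℤ} {h h' : ℕ} : lexPair v h = lexPair v' h' ↔ v = v' ∧ h = h' := by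
  simp [lexPair, and_comm]

variable {m : ℕ}

theorem mem_compatibleMaps_iff_antitone {σ : Fin m → ℤ} {t : ℕ} {g : Fin m → ℕ} :
    g ∈ compatibleMaps σ t ↔ (∀ i, g i ≤ t) ∧ Antitone (fun i => lexPair (σ i) (g i)) ∧
      ∀ i, 0 < σ i → 1 ≤ g i := by
  -- The end condition is the step from the last pair to the padding pair `(0, 0)`.
  have hpad : padWith (fun i => lexPair (σ i) (g i)) (lexPair 0 0)
      = fun j => lexPair (padWith σ 0 j) (padWith g 0 j) := by
    funext j
    unfold padWith
    split_ifs <;> rfl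
  have hbot : ∀ v h, lexPair 0 0 ≤ lexPair v h ↔ (0 < v → 1 ≤ h) := fun v h => by
    rw [lexPair_le_lexPair]
    split_ifs <;> omega
  simp only [mem_compatibleMaps, ← hbot, ← antitone_padWith_iff, hpad]
  refine and_congr_right fun _ => ⟨fun h => antitone_nat_of_succ_le fun j => ?_, fun h j => ?_⟩
  · exact lexPair_le_lexPair.2 (h j)
  · exact lexPair_le_lexPair.1 (h (Nat.le_succ j))

end LexWords

section Letters

def letterItems (t : ℕ) (a : ℤ) (negOnly : Prop) [Decidable negOnly] : Finset (ℕ ×ₗ ℤᵒᵈ) :=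
  (range (t + 1)).image (lexPair (-a)) ∪ if negOnly then ∅ else (Icc 1 t).image (lexPair a)

variable {t : ℕ} {a : ℤ} {negOnly : Prop} [Decidable negOnly]

theorem lexPair_mem_letterItems (ha : 0 < a) {v : ℤ} {h : ℕ} :
    lexPair v h ∈ letterItems t a negOnly ↔
      |v| = a ∧ h ≤ t ∧ (0 < v → 1 ≤ h) ∧ (negOnly → v < 0) := by
  rw [abs_eq ha.le]
  by_cases hneg : negOnly <;> simp [letterItems, hneg, lexPair_inj] <;> omega

theorem card_letterItems (ha : 0 < a) :
    (letterItems t a negOnly).card = if negOnly then t + 1 else 2 * t + 1 := by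
  have hinj : ∀ v, Function.Injective (lexPair v) := fun v h h' hh => (lexPair_inj.1 hh).2
  rw [letterItems, card_union_of_disjoint, card_image_of_injective _ (hinj _), card_range]
  · split_ifs
    · rfl
    · rw [card_image_of_injective _ (hinj _), Nat.card_Icc]
      omega
  · split_ifs
    · exact disjoint_empty_right _
    · simp only [disjoint_left, mem_image, mem_range, mem_Icc]
      rintro _ ⟨h, -, rfl⟩ ⟨h', -, hh'⟩
      have := (lexPair_inj.1 hh').1
      omega

end Letters

section Fibers

variable {ι β γ : Type*} [Fintype ι] [DecidableEq γ] {φ : β → γ} {ψ : ι → γ}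

theorem sum_filter_fiber_eq_self (hψ : Function.Injective ψ) {S : Multiset β}
    (hS : ∀ x ∈ S, ∃ a, φ x = ψ a) : ∑ a, S.filter (fun x => φ x = ψ a) = S := by
  classical
  ext y
  rw [Multiset.count_sum']
  simp only [Multiset.count_filter]
  by_cases hy : y ∈ S
  · obtain ⟨a, ha⟩ := hS y hy
    simp only [ha, hψ.eq_iff]
    rw [sum_ite_eq, if_pos (mem_univ a)]
  · simp [Multiset.count_eq_zero_of_notMem hy]

theorem filter_fiber_sum_eq (hψ : Function.Injective ψ) (F : ι → Multiset β)
    (hF : ∀ b, ∀ x ∈ F b, φ x = ψ b) (a : ι) :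
    (∑ b, F b).filter (fun x => φ x = ψ a) = F a := by
  classical
  have hfilter : ∀ b, (F b).filter (fun x => φ x = ψ a) = if b = a then F b else 0 := fun b => by
    split_ifs with hb
    · exact Multiset.filter_eq_self.2 fun x hx => hb ▸ hF b x hx
    · exact Multiset.filter_eq_nil.2 fun x hx h => hb (hψ ((hF b x hx).symm.trans h))
  let filterHom : Multiset β →+ Multiset β :=
    ⟨⟨Multiset.filter (fun x => φ x = ψ a), Multiset.filter_zero _⟩, Multiset.filter_add _⟩
  change filterHom (∑ b, F b) = F a
  rw [map_sum]
  simp only [filterHom, AddMonoidHom.coe_mk, ZeroHom.coe_mk, hfilter, sum_ite_eq', mem_univ,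
    if_true]

end Fibers

section SignedPerms

theorem mem_sperm {m : ℕ} {M : Multiset ℤ} {σ : Fin m → ℤ} :
    σ ∈ sperm m M ↔ univ.val.map (fun i => |σ i|) = M := by
  refine ⟨fun h => (mem_filter.1 h).2,
    fun h => mem_filter.2 ⟨Fintype.mem_piFinset.2 fun i => ?_, h⟩⟩
  have hi : |σ i| ∈ M := h ▸ Multiset.mem_map_of_mem _ (mem_univ_val i)
  rcases abs_choice (σ i) with hσ | hσ
  · exact mem_union_left _ (Multiset.mem_toFinset.2 (hσ ▸ hi))
  · exact mem_union_right _ (mem_image.2 ⟨_, Multiset.mem_toFinset.2 hi, by rw [hσ, neg_neg]⟩)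

variable {n : ℕ}

def letterContent (k : Fin n → ℕ) : Multiset ℤ := ∑ a, Multiset.replicate (k a) ((a : ℤ) + 1)

theorem Fin.intCast_add_one_injective : Function.Injective fun a : Fin n => (a : ℤ) + 1 :=
  fun a b h => Fin.ext (by simpa using h)

theorem count_letterContent (k : Fin n → ℕ) (a : Fin n) :
    (letterContent k).count ((a : ℤ) + 1) = k a := by
  simp only [letterContent, Multiset.count_sum', Multiset.count_replicate,
    Fin.intCast_add_one_injective.eq_iff, sum_ite_eq', mem_univ, if_true]

theorem exists_eq_of_mem_letterContent {k : Fin n → ℕ} {x : ℤ} (hx : x ∈ letterContent k) :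
    ∃ a : Fin n, x = a + 1 := by
  obtain ⟨a, -, ha⟩ := Multiset.mem_sum.1 hx
  exact ⟨a, Multiset.eq_of_mem_replicate ha⟩

def signedPerms (m : ℕ) (k : Fin n → ℕ) (p : Fin n → Prop) [DecidablePred p] :
    Finset (Fin m → ℤ) :=
  (sperm m (letterContent k)).filter fun σ =>
    ∀ i (a : Fin n), |σ i| = (a : ℤ) + 1 → p a → σ i < 0

end SignedPerms

section Counting

variable {n m : ℕ} {k : Fin n → ℕ} {p : Fin n → Prop} [DecidablePred p] {t : ℕ}

def lexAbs (x : ℕ ×ₗ ℤᵒᵈ) : ℤ := |OrderDual.ofDual (ofLex x).2|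

def letterChoices (t : ℕ) (k : Fin n → ℕ) (p : Fin n → Prop) [DecidablePred p] :
    Finset (∀ a, Sym (ℕ ×ₗ ℤᵒᵈ) (k a)) :=
  Fintype.piFinset fun a => (letterItems t ((a : ℤ) + 1) (p a)).sym (k a)

theorem admissible_of_mem_letterChoices {c : ∀ a, Sym (ℕ ×ₗ ℤᵒᵈ) (k a)}
    (hc : c ∈ letterChoices t k p) (b : Fin n) {x : ℕ ×ₗ ℤᵒᵈ}
    (hx : x ∈ (c b : Multiset (ℕ ×ₗ ℤᵒᵈ))) :
    lexAbs x = (b : ℤ) + 1 ∧ (ofLex x).1 ≤ t ∧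
      (0 < OrderDual.ofDual (ofLex x).2 → 1 ≤ (ofLex x).1) ∧
      (p b → OrderDual.ofDual (ofLex x).2 < 0) :=
  (lexPair_mem_letterItems (by positivity)).1
    (mem_sym_iff.1 (Fintype.mem_piFinset.1 hc b) x hx)

theorem injOn_sum_letterChoices :
    Set.InjOn (fun c : ∀ a, Sym (ℕ ×ₗ ℤᵒᵈ) (k a) => ∑ a, (c a : Multiset (ℕ ×ₗ ℤᵒᵈ)))
      (letterChoices t k p) := by
  intro c hc c' hc' h
  funext a
  apply Sym.coe_injective
  rw [← filter_fiber_sum_eq (φ := lexAbs) Fin.intCast_add_one_injective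
      (fun b => (c b : Multiset (ℕ ×ₗ ℤᵒᵈ)))
      (fun b x hx => (admissible_of_mem_letterChoices hc b hx).1),
    ← filter_fiber_sum_eq (φ := lexAbs) Fin.intCast_add_one_injective
      (fun b => (c' b : Multiset (ℕ ×ₗ ℤᵒᵈ)))
      (fun b x hx => (admissible_of_mem_letterChoices hc' b hx).1)]
  exact congrArg _ h

theorem eq_of_map_lexPair_eq {σ σ' : Fin m → ℤ} {g g' : Fin m → ℕ} (hg : g ∈ compatibleMaps σ t)
    (hg' : g' ∈ compatibleMaps σ' t)
    (h : univ.val.map (fun i => lexPair (σ i) (g i)) =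
      univ.val.map fun i => lexPair (σ' i) (g' i)) :
    σ = σ' ∧ g = g' := by
  have := (mem_compatibleMaps_iff_antitone.1 hg).2.1.eq_of_univ_map_eq
    (mem_compatibleMaps_iff_antitone.1 hg').2.1 h
  exact ⟨funext fun i => (lexPair_inj.1 (congrFun this i)).1,
    funext fun i => (lexPair_inj.1 (congrFun this i)).2⟩

theorem map_lexPair_mem_image {σ : Fin m → ℤ} {g : Fin m → ℕ} (hσ : σ ∈ signedPerms m k p)
    (hg : g ∈ compatibleMaps σ t) :
    univ.val.map (fun i => lexPair (σ i) (g i)) ∈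
      (letterChoices t k p).image fun c => ∑ a, (c a : Multiset (ℕ ×ₗ ℤᵒᵈ)) := by
  obtain ⟨hσM, hsign⟩ := mem_filter.1 hσ
  rw [mem_sperm] at hσM
  obtain ⟨hgt, -, hpos⟩ := mem_compatibleMaps_iff_antitone.1 hg
  set S := univ.val.map fun i => lexPair (σ i) (g i)
  have hcard : ∀ a : Fin n, Multiset.card (S.filter fun x => lexAbs x = a + 1) = k a := fun a => by
    rw [← count_letterContent k a, ← hσM, Multiset.count_map, Multiset.filter_map,
      Multiset.card_map]
    exact congrArg _ (Multiset.filter_congr fun i _ => eq_comm)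
  refine mem_image.2 ⟨fun a => Sym.mk (S.filter fun x => lexAbs x = a + 1) (hcard a),
    Fintype.mem_piFinset.2 fun a => mem_sym_iff.2 fun x hx => ?_, ?_⟩
  · obtain ⟨hxS, hxa⟩ := Multiset.mem_filter.1 ((Sym.mem_mk _ _ _).1 hx)
    obtain ⟨i, -, rfl⟩ := Multiset.mem_map.1 hxS
    exact (lexPair_mem_letterItems (by positivity)).2 ⟨hxa, hgt i, hpos i, hsign i a hxa⟩
  · change ∑ a : Fin n, S.filter (fun x => lexAbs x = (a : ℤ) + 1) = S
    refine sum_filter_fiber_eq_self Fin.intCast_add_one_injective fun x hx => ?_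
    obtain ⟨i, -, rfl⟩ := Multiset.mem_map.1 hx
    exact exists_eq_of_mem_letterContent (hσM ▸ Multiset.mem_map_of_mem _ (mem_univ_val i))

theorem exists_map_lexPair_eq (hm : ∑ a, k a = m) {S : Multiset (ℕ ×ₗ ℤᵒᵈ)}
    (hS : S ∈ (letterChoices t k p).image fun c => ∑ a, (c a : Multiset (ℕ ×ₗ ℤᵒᵈ))) :
    ∃ σ ∈ signedPerms m k p, ∃ g ∈ compatibleMaps σ t,
      univ.val.map (fun i => lexPair (σ i) (g i)) = S := by
  obtain ⟨c, hc, rfl⟩ := mem_image.1 hS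
  have hcard : Multiset.card (∑ a, (c a : Multiset (ℕ ×ₗ ℤᵒᵈ))) = m := by
    simp [← hm]
  obtain ⟨f, hf, hfS⟩ := Multiset.exists_antitone_univ_map_eq _ hcard
  have hmem : ∀ i, ∃ b, f i ∈ (c b : Multiset (ℕ ×ₗ ℤᵒᵈ)) := fun i => by
    obtain ⟨b, -, hb⟩ := Multiset.mem_sum.1 (hfS ▸ Multiset.mem_map_of_mem f (mem_univ_val i))
    exact ⟨b, hb⟩
  have hprop := fun i => admissible_of_mem_letterChoices hc _ (hmem i).choose_spec
  refine ⟨fun i => OrderDual.ofDual (ofLex (f i)).2, mem_filter.2 ⟨mem_sperm.2 ?_, ?_⟩,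
    fun i => (ofLex (f i)).1,
    mem_compatibleMaps_iff_antitone.2 ⟨fun i => (hprop i).2.1, hf, fun i => (hprop i).2.2.1⟩, hfS⟩
  · calc univ.val.map (fun i => |OrderDual.ofDual (ofLex (f i)).2|)
        = (∑ a, (c a : Multiset (ℕ ×ₗ ℤᵒᵈ))).map lexAbs := by rw [← hfS, Multiset.map_map]; rfl
      _ = ∑ a, (c a : Multiset (ℕ ×ₗ ℤᵒᵈ)).map lexAbs := map_sum (Multiset.mapAddMonoidHom _) _ _
      _ = letterContent k := sum_congr rfl fun a _ => Multiset.eq_replicate.2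
          ⟨by simp, fun y hy => by
            obtain ⟨x, hx, rfl⟩ := Multiset.mem_map.1 hy
            exact (admissible_of_mem_letterChoices hc a hx).1⟩
  · intro i a hia hpa
    obtain ⟨hb, -, -, hneg⟩ := hprop i
    exact hneg (Fin.intCast_add_one_injective (hb.symm.trans hia) ▸ hpa)

theorem sum_Omega_signedPerms (hm : ∑ a, k a = m) :
    ∑ σ ∈ signedPerms m k p, Omega σ t
      = ∏ a, (if p a then t + 1 else 2 * t + 1).multichoose (k a) := by
  calc ∑ σ ∈ signedPerms m k p, Omega σ t
      = ((signedPerms m k p).sigma fun σ => compatibleMaps σ t).card := by rw [card_sigma]; rfl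
    _ = ((letterChoices t k p).image fun c => ∑ a, (c a : Multiset (ℕ ×ₗ ℤᵒᵈ))).card := by
      refine card_bij (fun x _ => univ.val.map fun i => lexPair (x.1 i) (x.2 i))
        (fun x hx => map_lexPair_mem_image (mem_sigma.1 hx).1 (mem_sigma.1 hx).2)
        (fun ⟨σ, g⟩ hx ⟨σ', g'⟩ hx' h => ?_) fun S hS => ?_
      · obtain ⟨rfl, rfl⟩ := eq_of_map_lexPair_eq (mem_sigma.1 hx).2 (mem_sigma.1 hx').2 h
        rfl
      · obtain ⟨σ, hσ, g, hg, rfl⟩ := exists_map_lexPair_eq hm hS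
        exact ⟨⟨σ, g⟩, mem_sigma.2 ⟨hσ, hg⟩, rfl⟩
    _ = (letterChoices t k p).card := card_image_of_injOn injOn_sum_letterChoices
    _ = ∏ a, (if p a then t + 1 else 2 * t + 1).multichoose (k a) := by
      rw [letterChoices, Fintype.card_piFinset]
      refine prod_congr rfl fun a _ => ?_
      rw [card_sym_eq_multichoose, card_letterItems (by positivity)]

end Counting

def Umultiplicity (n : ℕ) (a : Fin n) : ℕ := if (a : ℕ) + 1 < n then 2 else 1

theorem Umult_eq_letterContent (n : ℕ) :
    Umult (n + 1) = letterContent (Umultiplicity (n + 1)) := by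
  rw [Umult, letterContent, Fin.sum_univ_castSucc, Nat.add_sub_cancel]
  simp only [Umultiplicity, Fin.val_castSucc, Fin.val_last, add_lt_add_iff_right, Fin.is_lt,
    if_true, lt_irrefl, if_false]
  rw [← range_val, Multiset.bind, Multiset.join, ← sum_eq_multiset_sum,
    Fin.sum_univ_eq_sum_range (fun k => Multiset.replicate 2 ((k : ℤ) + 1))]
  push_cast
  rfl

theorem sum_Umultiplicity (n : ℕ) : ∑ a, Umultiplicity (n + 1) a = 2 * (n + 1) - 1 := by
  rw [Fin.sum_univ_castSucc]
  simp [Umultiplicity]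
  omega

theorem Vset_eq_signedPerms (n : ℕ) :
    Vset (n + 1) =
      signedPerms (2 * (n + 1) - 1) (Umultiplicity (n + 1)) fun a => (a : ℕ) + 1 = n + 1 := by
  rw [Vset, Uset, signedPerms, Umult_eq_letterContent]
  refine filter_congr fun σ _ => ⟨fun h i a hia ha => h i (by rw [hia]; push_cast; omega),
    fun h i hi => h i (Fin.last n) (by rw [hi]; push_cast; simp) rfl⟩

theorem sum_Omega_Vset (n t : ℕ) :
    ∑ σ ∈ Vset (n + 1), Omega σ t = (t + 1) ^ (n + 1) * (2 * t + 1) ^ n := by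
  have hlt : ∀ a : Fin n, (a : ℕ) ≠ n := fun a => a.is_lt.ne
  have htwo : (2 * t + 1).multichoose 2 = (t + 1) * (2 * t + 1) := by
    rw [Nat.multichoose_eq, Nat.choose_two_right, show 2 * t + 1 + 2 - 1 = 2 * (t + 1) by omega,
      show 2 * (t + 1) - 1 = 2 * t + 1 by omega, mul_assoc, Nat.mul_div_cancel_left _ two_pos]
  rw [Vset_eq_signedPerms, sum_Omega_signedPerms (sum_Umultiplicity n), Fin.prod_univ_castSucc]
  simp only [Umultiplicity, Fin.val_castSucc, Fin.val_last, add_lt_add_iff_right, Fin.is_lt,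
    if_true, lt_irrefl, if_false, add_left_inj, hlt, htwo, Nat.multichoose_one_right, prod_const,
    card_univ, Fintype.card_fin, mul_pow]
  ring

theorem stmt12 (n : ℕ) (hn : 1 ≤ n) :
    (∑ σ ∈ Vset n, (PowerSeries.X : PowerSeries ℤ) ^ desB σ)
      = (PowerSeries.mk fun t => ((t + 1) ^ n * (2 * t + 1) ^ (n - 1) : ℤ))
          * (1 - PowerSeries.X) ^ (2 * n) := by
  obtain ⟨n, rfl⟩ : ∃ n', n = n' + 1 := ⟨n - 1, by omega⟩
  have h := sum_X_pow_desB_mul_invOneSubPow (Vset (n + 1))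
  rw [show 2 * (n + 1) - 1 + 1 = 2 * (n + 1) by omega] at h
  rw [← invOneSubPow_inv_eq_one_sub_pow, Units.inv_eq_val_inv, Units.eq_mul_inv_iff_mul_eq, h]
  congr 1
  funext t
  rw [← Nat.cast_sum, sum_Omega_Vset]
  push_cast
  simp
end
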